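/- Let M ∈ 𝒫 be a mean partition of the sample (X_1,…,X_n) of partitions. Then every representative B ∈ 𝒳 of M is of the form B = (1/n)·Σ_{i=1}^n A_i, where each A_i ∈ 𝒳 is a representative of X_i in optimal position with B, i.e., δ(X_i, M) = ‖A_i − B‖. -/

import Mathlib

open scoped BigOperators
open MeasureTheory

noncomputable section

/-- Matrices as points of the Euclidean space `ℝ^{ℓ×m}` with the Frobenius norm. -/
abbrev Mat (l m : ℕ) := EuclideanSpace ℝ (Fin l × Fin m)

/-- `A` is a representation matrix: entries in `[0,1]` and each column sums to `1`. -/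
def IsRep {l m : ℕ} (A : Mat l m) : Prop :=
  (∀ p, 0 ≤ A p ∧ A p ≤ 1) ∧ ∀ j : Fin m, ∑ k : Fin l, A (k, j) = 1

/-- The representation space `𝒳`. -/
abbrev RepSpace (l m : ℕ) := {A : Mat l m // IsRep A}

/-- Action of a permutation on a matrix by permuting rows. -/
def permAct {l m : ℕ} (σ : Equiv.Perm (Fin l)) (A : Mat l m) : Mat l m :=
  WithLp.toLp 2 (fun p => A (σ⁻¹ p.1, p.2))

lemma isRep_permAct {l m : ℕ} (σ : Equiv.Perm (Fin l)) {A : Mat l m} (hA : IsRep A) :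
    IsRep (permAct σ A) := by
  refine ⟨fun p => hA.1 _, fun j => ?_⟩
  have h := Equiv.sum_comp σ⁻¹ (fun k => A (k, j))
  simpa [permAct] using h.trans (hA.2 j)

instance {l m : ℕ} : SMul (Equiv.Perm (Fin l)) (RepSpace l m) :=
  ⟨fun σ A => ⟨permAct σ A.1, isRep_permAct σ A.2⟩⟩

lemma smul_rep_def {l m : ℕ} (σ : Equiv.Perm (Fin l)) (A : RepSpace l m) :
    (σ • A).1 = permAct σ A.1 := rfl

instance {l m : ℕ} : MulAction (Equiv.Perm (Fin l)) (RepSpace l m) where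
  one_smul A := Subtype.ext rfl
  mul_smul σ τ A := Subtype.ext rfl

/-- Two representation matrices are equivalent iff they lie in the same `Π`-orbit. -/
instance pSetoid (l m : ℕ) : Setoid (RepSpace l m) :=
  MulAction.orbitRel (Equiv.Perm (Fin l)) (RepSpace l m)

/-- The partition space `𝒫 = 𝒳/Π`. -/
abbrev PSpace (l m : ℕ) := Quotient (pSetoid l m)

/-- The intrinsic metric `δ` on `𝒫`: the minimal Euclidean distance between representatives. -/
def pdist {l m : ℕ} (X Y : PSpace l m) : ℝ :=
  sInf {d | ∃ A B : RepSpace l m, ⟦A⟧ = X ∧ ⟦B⟧ = Y ∧ d = dist A B}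

/-- The degree of asymmetry `α` of the partition represented by `A`:
`min {‖A - σ·A‖ : σ ≠ id}`. -/
def alpha {l m : ℕ} (A : RepSpace l m) : ℝ :=
  sInf {d | ∃ σ : Equiv.Perm (Fin l), σ ≠ 1 ∧ d = dist A (σ • A)}

/-- The closed ball in the partition space. -/
def pBall {l m : ℕ} (Z : PSpace l m) (r : ℝ) : Set (PSpace l m) :=
  {X | pdist X Z ≤ r}

/-- The metric topology on `𝒫` generated by the open balls of `δ`. -/
instance {l m : ℕ} : TopologicalSpace (PSpace l m) :=
  TopologicalSpace.generateFrom {s | ∃ (Z : PSpace l m) (r : ℝ), s = {X | pdist X Z < r}}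

instance {l m : ℕ} : MeasurableSpace (PSpace l m) := borel _

/-- `B(Z, r)` is a homogeneous ball: there is a bijective isometry onto the closed ball of
radius `r` in `𝒳` centered at a representative of `Z`. -/
def IsHomBall {l m : ℕ} (Z : PSpace l m) (r : ℝ) : Prop :=
  ∃ A : RepSpace l m, ⟦A⟧ = Z ∧
    ∃ φ : pBall Z r → {B : RepSpace l m | dist B A ≤ r},
      Function.Bijective φ ∧
        ∀ X Y : pBall Z r,
          dist (φ X : RepSpace l m) (φ Y : RepSpace l m) =
            pdist (X : PSpace l m) (Y : PSpace l m)

/-- The `k`-th row of a representation matrix, as a point of Euclidean space `ℝ^m`. -/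
def rowOf {l m : ℕ} (A : RepSpace l m) (k : Fin l) : EuclideanSpace ℝ (Fin m) :=
  WithLp.toLp 2 (fun j => A.1 (k, j))

/-- The support of a measure: the smallest closed set of full measure. -/
def msupport {l m : ℕ} (Q : Measure (PSpace l m)) : Set (PSpace l m) :=
  ⋂₀ {S | IsClosed S ∧ Q S = 1}

/-- The Dirichlet fundamental domain centered at `A`. -/
def DirDom {l m : ℕ} (A : RepSpace l m) : Set (RepSpace l m) :=
  {B | ∀ σ : Equiv.Perm (Fin l), dist B A ≤ dist B (σ • A)}

/-! Take representatives `A i` of the `X i` in optimal position with `B` and let `C` be their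
average, which lies in `𝒳` by convexity. Then `F_n([C]) ≤ (1/n) Σ ‖A i - C‖²`, while
`Σ ‖A i - B‖² = Σ ‖A i - C‖² + n ‖C - B‖²` and `n F_n(M) = Σ ‖A i - B‖²`. Minimality of `M`
forces `‖C - B‖ = 0`. -/

open Finset

section InnerProductSpace

variable {ι E : Type*} [NormedAddCommGroup E] [InnerProductSpace ℝ E]

/-- The cross terms `2⟪a i - c, c - b⟫` cancel because `c` is the average of the `a i`. -/
theorem sum_norm_sub_sq_eq_sum_norm_sub_average_sq_add (s : Finset ι) (a : ι → E) (b : E)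
    {c : E} (hc : (#s : ℝ) • c = ∑ i ∈ s, a i) :
    ∑ i ∈ s, ‖a i - b‖ ^ 2 = ∑ i ∈ s, ‖a i - c‖ ^ 2 + #s * ‖c - b‖ ^ 2 := by
  have hsplit : ∀ i, ‖a i - b‖ ^ 2
      = ‖a i - c‖ ^ 2 + 2 * inner ℝ (a i - c) (c - b) + ‖c - b‖ ^ 2 := fun i => by
    rw [← norm_add_sq_real, sub_add_sub_cancel]
  have hcentered : ∑ i ∈ s, (a i - c) = 0 := by
    rw [sum_sub_distrib, ← hc, sum_const, Nat.cast_smul_eq_nsmul, sub_self]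
  simp only [hsplit, sum_add_distrib, ← mul_sum, ← sum_inner, hcentered, inner_zero_left,
    mul_zero, add_zero, sum_const, nsmul_eq_mul]

theorem eq_of_sum_norm_sub_sq_le_sum_norm_sub_average_sq {s : Finset ι} (hs : s.Nonempty)
    {a : ι → E} {b c : E} (hc : (#s : ℝ) • c = ∑ i ∈ s, a i)
    (h : ∑ i ∈ s, ‖a i - b‖ ^ 2 ≤ ∑ i ∈ s, ‖a i - c‖ ^ 2) : b = c := by
  rw [sum_norm_sub_sq_eq_sum_norm_sub_average_sq_add s a b hc] at h
  have hcard : (0 : ℝ) < #s := by exact_mod_cast hs.card_pos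
  have hcb : ‖c - b‖ ^ 2 = 0 :=
    le_antisymm (nonpos_of_mul_nonpos_right (by linarith) hcard) (sq_nonneg _)
  rw [sq_eq_zero_iff, norm_sub_eq_zero_iff] at hcb
  exact hcb.symm

end InnerProductSpace

section PartitionSpace

variable {l m : ℕ}

theorem convex_setOf_isRep : Convex ℝ {A : Mat l m | IsRep A} := by
  intro A hA B hB a b ha hb hab
  refine ⟨fun p => ⟨?_, ?_⟩, fun j => ?_⟩
  · simp only [PiLp.add_apply, PiLp.smul_apply, smul_eq_mul]
    nlinarith [(hA.1 p).1, (hB.1 p).1]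
  · simp only [PiLp.add_apply, PiLp.smul_apply, smul_eq_mul]
    nlinarith [(hA.1 p).2, (hB.1 p).2]
  · simp only [PiLp.add_apply, PiLp.smul_apply, smul_eq_mul, sum_add_distrib, ← mul_sum,
      hA.2 j, hB.2 j, mul_one, hab]

theorem permAct_eq_piLpCongrLeft (σ : Equiv.Perm (Fin l)) (A : Mat l m) :
    permAct σ A =
      LinearIsometryEquiv.piLpCongrLeft 2 ℝ ℝ (σ.prodCongr (Equiv.refl (Fin m))) A :=
  rfl

instance : IsIsometricSMul (Equiv.Perm (Fin l)) (RepSpace l m) :=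
  ⟨fun σ => Isometry.of_dist_eq fun A B => by
    simp only [Subtype.dist_eq, smul_rep_def, permAct_eq_piLpCongrLeft,
      LinearIsometryEquiv.dist_map]⟩

theorem pdist_mk_mk (A B : RepSpace l m) :
    pdist ⟦A⟧ ⟦B⟧ = ⨅ σ : Equiv.Perm (Fin l), dist (σ • A) B := by
  rw [pdist, iInf]
  congr 1
  ext d
  constructor
  · rintro ⟨A', B', hA', hB', rfl⟩
    obtain ⟨ρ, rfl⟩ := Quotient.exact hA'
    obtain ⟨τ, rfl⟩ := Quotient.exact hB'
    refine ⟨τ⁻¹ * ρ, ?_⟩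
    change dist ((τ⁻¹ * ρ) • A) B = dist (ρ • A) (τ • B)
    rw [mul_smul, ← dist_smul τ, smul_inv_smul]
  · rintro ⟨σ, rfl⟩
    exact ⟨σ • A, B, Quotient.sound ⟨σ, rfl⟩, rfl, rfl⟩

theorem pdist_mk_mk_le_dist (A B : RepSpace l m) : pdist ⟦A⟧ ⟦B⟧ ≤ dist A B := by
  rw [pdist_mk_mk]
  simpa only [one_smul] using
    ciInf_le (Finite.bddBelow_range fun σ => dist (σ • A) B) (1 : Equiv.Perm (Fin l))

theorem pdist_mk_mk_nonneg (A B : RepSpace l m) : 0 ≤ pdist ⟦A⟧ ⟦B⟧ := by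
  rw [pdist_mk_mk]
  exact Real.iInf_nonneg fun _ => dist_nonneg

/-- The infimum defining `δ` is attained, as it runs over the finite group `Π`. -/
theorem exists_mk_eq_and_pdist_eq_dist (X : PSpace l m) (B : RepSpace l m) :
    ∃ A : RepSpace l m, ⟦A⟧ = X ∧ pdist X ⟦B⟧ = dist A B := by
  obtain ⟨A, rfl⟩ := Quotient.exists_rep X
  obtain ⟨σ, hσ⟩ := exists_eq_ciInf_of_finite (f := fun σ : Equiv.Perm (Fin l) => dist (σ • A) B)
  exact ⟨σ • A, Quotient.sound ⟨σ, rfl⟩, by rw [pdist_mk_mk, ← hσ]⟩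

end PartitionSpace

theorem stmt13_general {l m n : ℕ} (hn : 1 ≤ n)
    (X : Fin n → PSpace l m) (M : PSpace l m)
    (hM : ∀ W : PSpace l m,
      (1 / (n : ℝ)) * ∑ i, pdist (X i) M ^ 2 ≤ (1 / (n : ℝ)) * ∑ i, pdist (X i) W ^ 2)
    (B : RepSpace l m) (hB : (⟦B⟧ : PSpace l m) = M) :
    ∃ A : Fin n → RepSpace l m,
      (∀ i, (⟦A i⟧ : PSpace l m) = X i) ∧
      (∀ i, pdist (X i) M = dist (A i) B) ∧
      B.1 = (1 / (n : ℝ)) • ∑ i, (A i).1 := by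
  have hn' : (0 : ℝ) < n := by exact_mod_cast hn
  choose A hAX hAB using fun i => exists_mk_eq_and_pdist_eq_dist (X i) B
  subst hB
  refine ⟨A, hAX, hAB, ?_⟩
  set C : Mat l m := (1 / (n : ℝ)) • ∑ i, (A i).1
  have hC : IsRep C := by
    simp only [C, smul_sum]
    exact convex_setOf_isRep.sum_mem (fun _ _ => by positivity)
      (by simp [hn'.ne']) (fun i _ => (A i).2)
  refine eq_of_sum_norm_sub_sq_le_sum_norm_sub_average_sq (a := fun i => (A i).1) (c := C)
    (s := univ) ⟨⟨0, hn⟩, mem_univ _⟩ (by simp [C, smul_smul, hn'.ne']) ?_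
  calc ∑ i, ‖(A i).1 - B.1‖ ^ 2 = ∑ i, pdist (X i) ⟦B⟧ ^ 2 := by
        simp only [hAB, Subtype.dist_eq, dist_eq_norm]
    _ ≤ ∑ i, pdist (X i) ⟦⟨C, hC⟩⟧ ^ 2 := le_of_mul_le_mul_left (hM _) (by positivity)
    _ ≤ ∑ i, ‖(A i).1 - C‖ ^ 2 := sum_le_sum fun i _ => by
        rw [← hAX i, ← dist_eq_norm]
        exact pow_le_pow_left₀ (pdist_mk_mk_nonneg _ _) (pdist_mk_mk_le_dist _ _) 2

theorem stmt13 {l m n : ℕ} (hl : 1 ≤ l) (hm : 1 ≤ m) (hn : 1 ≤ n)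
    (X : Fin n → PSpace l m) (M : PSpace l m)
    (hM : ∀ W : PSpace l m,
      (1 / (n : ℝ)) * ∑ i, pdist (X i) M ^ 2 ≤ (1 / (n : ℝ)) * ∑ i, pdist (X i) W ^ 2)
    (B : RepSpace l m) (hB : (⟦B⟧ : PSpace l m) = M) :
    ∃ A : Fin n → RepSpace l m,
      (∀ i, (⟦A i⟧ : PSpace l m) = X i) ∧
      (∀ i, pdist (X i) M = dist (A i) B) ∧
      B.1 = (1 / (n : ℝ)) • ∑ i, (A i).1 :=
  stmt13_general hn X M hM B hB
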